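/- Let G = (V, w) be a connected n-vertex weighted graph (λ(G) > 0) and let A ∈ ℝ^{k×(n choose 2)} be a connectivity certificate for G, i.e., for every nonnegative w' : V^(2) → ℝ with Aw' = Aw one has λ(V,w') > 0. Then there exists τ > 0 such that for every nonnegative w' with Aw' = Aw, λ(V,w') ≥ τ. -/

import Mathlib

open Finset Matrix

/-- The set of edge slots: 2-element subsets of the vertex set `Fin n`. -/
abbrev EdgeSlot (n : ℕ) := {e : Finset (Fin n) // e.card = 2}

/-- Weight of the cut with shore `S`: sum of weights of edge slots with exactly
one endpoint in `S`. -/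
noncomputable def cutWeight (n : ℕ) (w : EdgeSlot n → ℝ) (S : Finset (Fin n)) : ℝ :=
  ∑ e : EdgeSlot n, if (e.1 ∩ S).card = 1 then w e else 0

/-- `λ(G)`: the minimum cut weight over all shores `∅ ≠ S ⊊ V`. -/
noncomputable def minCutVal (n : ℕ) (w : EdgeSlot n → ℝ) : ℝ :=
  sInf {x : ℝ | ∃ S : Finset (Fin n), S.Nonempty ∧ S ≠ Finset.univ ∧ cutWeight n w S = x}

/-- The at-least-τ linear-query certificate complexity: the least `k` such that some
`k`-row query matrix `A` certifies that every nonnegative `w'` consistent with the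
answers on `w` has minimum cut value at least `τ`. -/
noncomputable def atLeastCert (n : ℕ) (τ : ℝ) (w : EdgeSlot n → ℝ) : ℕ :=
  sInf {k : ℕ | ∃ A : Matrix (Fin k) (EdgeSlot n) ℝ,
    ∀ w' : EdgeSlot n → ℝ, (∀ e, 0 ≤ w' e) → A.mulVec w = A.mulVec w' →
      τ ≤ minCutVal n w'}

/-- The minimum-cut linear-query certificate complexity. -/
noncomputable def mincutCert (n : ℕ) (w : EdgeSlot n → ℝ) : ℕ :=
  sInf {k : ℕ | ∃ A : Matrix (Fin k) (EdgeSlot n) ℝ,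
    ∀ w' : EdgeSlot n → ℝ, (∀ e, 0 ≤ w' e) → A.mulVec w = A.mulVec w' →
      minCutVal n w' = minCutVal n w}

/-- The connectivity linear-query certificate complexity. -/
noncomputable def conCert (n : ℕ) (w : EdgeSlot n → ℝ) : ℕ :=
  sInf {k : ℕ | ∃ A : Matrix (Fin k) (EdgeSlot n) ℝ,
    ∀ w' : EdgeSlot n → ℝ, (∀ e, 0 ≤ w' e) → A.mulVec w = A.mulVec w' →
      (0 < minCutVal n w' ↔ 0 < minCutVal n w)}

/-- Row indices of the universal cut-edge incidence matrix: nonempty sets of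
vertices not containing vertex `1` (represented as `0 : Fin n`). -/
abbrev Shore (n : ℕ) [NeZero n] := {S : Finset (Fin n) // S.Nonempty ∧ (0 : Fin n) ∉ S}

/-- The universal cut-edge incidence matrix `M_n`. -/
noncomputable def Mn (n : ℕ) [NeZero n] : Matrix (Shore n) (EdgeSlot n) ℝ :=
  fun S e => if (e.1 ∩ S.1).card = 1 then 1 else 0

/-- `τ`-cut-rank of a graph: the minimum rank of a matrix `X ≤ M_n` (entrywise)
with every entry of `Xw` at least `τ`. -/
noncomputable def cutRank (n : ℕ) [NeZero n] (τ : ℝ) (w : EdgeSlot n → ℝ) : ℕ :=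
  sInf {r : ℕ | ∃ X : Matrix (Shore n) (EdgeSlot n) ℝ,
    (∀ S e, X S e ≤ Mn n S e) ∧ (∀ S, τ ≤ X.mulVec w S) ∧ X.rank = r}

/-- The weight vector of the `n`-cycle with unit weights. -/
noncomputable def cycleWeight (n : ℕ) [NeZero n] : EdgeSlot n → ℝ :=
  fun e => if ∃ i : Fin n, e.1 = {i, i + 1} then 1 else 0

/-!
For a fixed shore `S`, the pairs `(A w', w'(Δ(S)))` with `w' ≥ 0` form a finitely generated
cone, and finitely generated cones are closed (conic Carathéodory reduces to finitely many
injective images of orthants). If `w'(Δ(S))` could be made arbitrarily small on the fiber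
`A w' = A w`, closedness would put `(A w, 0)` in the cone, i.e. give a nonnegative `w'` in the
fiber with a cut of weight zero, contradicting the certificate property. A minimum over the
finitely many shores then gives `τ`.
-/

open Filter Topology

section FinitelyGeneratedCone

variable {ι : Type*}

def supportedIn (s : Set ι) : Submodule ℝ (ι → ℝ) where
  carrier := {c | c.support ⊆ s}
  add_mem' ha hb := (Function.support_add _ _).trans (Set.union_subset ha hb)
  zero_mem' := by simp
  smul_mem' r _ hc := (Function.support_const_smul_subset r _).trans hc

variable [Finite ι]

theorem exists_nonneg_sub_smul_support_ssubset {c d : ι → ℝ} (hc : 0 ≤ c) (hd : d ≠ 0)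
    (hdc : d.support ⊆ c.support) :
    ∃ t : ℝ, 0 ≤ c - t • d ∧ (c - t • d).support ⊂ c.support := by
  wlog hpos : ∃ i, 0 < d i generalizing d
  · obtain ⟨t, ht⟩ := this (neg_ne_zero.2 hd) (by rwa [Function.support_neg]) <| by
      simp only [not_exists, not_lt] at hpos
      obtain ⟨i, hi⟩ := Function.ne_iff.1 hd
      exact ⟨i, neg_pos.2 ((hpos i).lt_of_ne hi)⟩
    exact ⟨-t, by simpa only [neg_smul, smul_neg] using ht⟩
  obtain ⟨i₀, hi₀, hmin⟩ :=
    Set.exists_min_image {i | 0 < d i} (fun i => c i / d i) (Set.toFinite _) hpos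
  have hdi₀ : 0 < d i₀ := hi₀
  have ht : 0 ≤ c i₀ / d i₀ := div_nonneg (hc i₀) hdi₀.le
  refine ⟨c i₀ / d i₀, fun i => ?_, ?_⟩
  · rcases le_or_gt (d i) 0 with hdi | hdi
    · simpa using (mul_nonpos_of_nonneg_of_nonpos ht hdi).trans (hc i)
    · simpa using (le_div_iff₀ hdi).1 (hmin i hdi)
  · have hsub : (c - (c i₀ / d i₀) • d).support ⊆ c.support :=
      (Function.support_sub _ _).trans
        (Set.union_subset subset_rfl ((Function.support_const_smul_subset _ _).trans hdc))
    refine (Set.ssubset_iff_of_subset hsub).2 ⟨i₀, hdc hdi₀.ne', ?_⟩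
    simp [div_mul_cancel₀ _ hdi₀.ne']

theorem exists_nonneg_map_eq_disjoint_ker {M : Type*} [AddCommGroup M] [Module ℝ M]
    (L : (ι → ℝ) →ₗ[ℝ] M) {c : ι → ℝ} (hc : 0 ≤ c) :
    ∃ c', 0 ≤ c' ∧ L c' = L c ∧ Disjoint (supportedIn c'.support) (LinearMap.ker L) := by
  induction h : c.support.ncard using Nat.strong_induction_on generalizing c with
  | _ m ih =>
  by_cases hdis : Disjoint (supportedIn c.support) (LinearMap.ker L)
  · exact ⟨c, hc, rfl, hdis⟩
  obtain ⟨d, hdc, hdL, hd⟩ : ∃ d ∈ supportedIn c.support, d ∈ LinearMap.ker L ∧ d ≠ 0 := by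
    simpa [Submodule.disjoint_def] using hdis
  obtain ⟨t, ht, hsub⟩ := exists_nonneg_sub_smul_support_ssubset hc hd hdc
  obtain ⟨c', hc', hLc', hdis'⟩ := ih _ (h ▸ Set.ncard_lt_ncard hsub (Set.toFinite _)) ht rfl
  refine ⟨c', hc', ?_, hdis'⟩
  rw [hLc', map_sub, map_smul, LinearMap.mem_ker.1 hdL, smul_zero, sub_zero]

variable {E : Type*} [AddCommGroup E] [Module ℝ E] [TopologicalSpace E] [IsTopologicalAddGroup E]
  [ContinuousSMul ℝ E] [T2Space E]

theorem isClosed_image_nonneg (L : (ι → ℝ) →ₗ[ℝ] E) : IsClosed (L '' {c | 0 ≤ c}) := by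
  have hunion : L '' {c | 0 ≤ c} = ⋃ s ∈ {s : Set ι | Disjoint (supportedIn s) (LinearMap.ker L)},
      L '' ({c | 0 ≤ c} ∩ supportedIn s) := by
    refine subset_antisymm ?_ (Set.iUnion₂_subset fun s _ => Set.image_mono Set.inter_subset_left)
    rintro _ ⟨c, hc, rfl⟩
    obtain ⟨c', hc', hLc', hdis⟩ := exists_nonneg_map_eq_disjoint_ker L hc
    exact Set.mem_biUnion hdis ⟨c', ⟨hc', (subset_rfl : c'.support ⊆ _)⟩, hLc'⟩
  rw [hunion]
  refine (Set.toFinite _).isClosed_biUnion fun s hs => ?_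
  have hemb : Topology.IsClosedEmbedding (L.domRestrict (supportedIn s)) :=
    LinearMap.isClosedEmbedding_of_injective <| by
      rwa [LinearMap.ker_domRestrict, ← Submodule.disjoint_iff_comap_eq_bot]
  convert hemb.isClosedMap _ ((isClosed_Ici (a := (0 : ι → ℝ))).preimage continuous_subtype_val)
    using 1
  ext x
  simp [and_assoc]

theorem exists_pos_le_of_pos_on_fiber (L : (ι → ℝ) →ₗ[ℝ] E) (f : (ι → ℝ) →ₗ[ℝ] ℝ) (y : E)
    (h : ∀ c, 0 ≤ c → L c = y → 0 < f c) :
    ∃ τ, 0 < τ ∧ ∀ c, 0 ≤ c → L c = y → τ ≤ f c := by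
  set T := (fun r : ℝ => (y, r)) ⁻¹' (L.prod f '' {c | 0 ≤ c})
  have hT : IsClosed T := (isClosed_image_nonneg (L.prod f)).preimage (by fun_prop)
  have h0 : (0 : ℝ) ∉ T := by
    rintro ⟨c, hc, hcy⟩
    obtain ⟨hLc, hfc⟩ := Prod.ext_iff.1 hcy
    exact (h c hc hLc).ne' hfc
  obtain ⟨ε, hε, hball⟩ := Metric.isOpen_iff.1 hT.isOpen_compl 0 h0
  refine ⟨ε, hε, fun c hc hcy => ?_⟩
  have hfar : f c ∉ Metric.ball 0 ε := fun hb => hball hb ⟨c, hc, by simp [hcy]⟩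
  rw [Metric.mem_ball, Real.dist_eq, sub_zero, abs_of_pos (h c hc hcy)] at hfar
  exact not_lt.1 hfar

end FinitelyGeneratedCone

noncomputable def cutWeightLinear (n : ℕ) (S : Finset (Fin n)) : (EdgeSlot n → ℝ) →ₗ[ℝ] ℝ where
  toFun w := cutWeight n w S
  map_add' a b := by
    simp only [cutWeight, Pi.add_apply, ← Finset.sum_add_distrib]
    exact Finset.sum_congr rfl fun e _ => by split_ifs <;> simp
  map_smul' r a := by
    simp only [cutWeight, Pi.smul_apply, smul_eq_mul, RingHom.id_apply, Finset.mul_sum]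
    exact Finset.sum_congr rfl fun e _ => by split_ifs <;> simp

theorem minCutVal_le_cutWeight {n : ℕ} {w : EdgeSlot n → ℝ} (hw : 0 ≤ w) {S : Finset (Fin n)}
    (hS : S.Nonempty) (hSu : S ≠ Finset.univ) : minCutVal n w ≤ cutWeight n w S := by
  refine csInf_le ⟨0, ?_⟩ ⟨S, hS, hSu, rfl⟩
  rintro _ ⟨T, -, -, rfl⟩
  exact Finset.sum_nonneg fun e _ => by split_ifs; exacts [hw e, le_rfl]

theorem le_minCutVal {n : ℕ} {w : EdgeSlot n → ℝ} {τ : ℝ} (hpos : 0 < minCutVal n w)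
    (h : ∀ S : Finset (Fin n), S.Nonempty → S ≠ Finset.univ → τ ≤ cutWeight n w S) :
    τ ≤ minCutVal n w := by
  refine le_csInf ?_ ?_
  · by_contra hempty
    rw [Set.not_nonempty_iff_eq_empty] at hempty
    rw [minCutVal, hempty, Real.sInf_empty] at hpos
    exact hpos.false
  · rintro _ ⟨S, hS, hSu, rfl⟩
    exact h S hS hSu

theorem connectivity_certificate_uniform_lower_bound_general (n k : ℕ) (w : EdgeSlot n → ℝ)
    (A : Matrix (Fin k) (EdgeSlot n) ℝ)
    (hA : ∀ w' : EdgeSlot n → ℝ, (∀ e, 0 ≤ w' e) → A.mulVec w' = A.mulVec w →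
      0 < minCutVal n w') :
    ∃ τ : ℝ, 0 < τ ∧ ∀ w' : EdgeSlot n → ℝ, (∀ e, 0 ≤ w' e) →
      A.mulVec w' = A.mulVec w → τ ≤ minCutVal n w' := by
  have hcut (S : {S : Finset (Fin n) // S.Nonempty ∧ S ≠ Finset.univ}) :
      ∀ᶠ τ in 𝓝[>] (0 : ℝ), ∀ w' : EdgeSlot n → ℝ, 0 ≤ w' → A *ᵥ w' = A *ᵥ w →
        τ ≤ cutWeight n w' S := by
    obtain ⟨τ, hτ, hle⟩ := exists_pos_le_of_pos_on_fiber A.mulVecLin (cutWeightLinear n S)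
      (A *ᵥ w) fun w' hw' hAw' => (hA w' hw' hAw').trans_le
        (minCutVal_le_cutWeight hw' S.2.1 S.2.2)
    filter_upwards [Ioo_mem_nhdsGT hτ] with τ' hτ' w' hw' hAw'
    exact hτ'.2.le.trans (hle w' hw' hAw')
  -- a common bound for the finitely many shores: intersect the eventualities in `𝓝[>] 0`
  obtain ⟨τ, hτ, hτpos⟩ := ((eventually_all.2 hcut).and self_mem_nhdsWithin).exists
  exact ⟨τ, hτpos, fun w' hw' hAw' =>
    le_minCutVal (hA w' hw' hAw') fun S hS hSu => hτ ⟨S, hS, hSu⟩ w' hw' hAw'⟩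

/-- If `A` is a connectivity certificate for a connected graph `G = (V, w)`, then
there is a `τ > 0` such that every nonnegative `w'` consistent with the query
answers satisfies `λ(V, w') ≥ τ`. -/
theorem connectivity_certificate_uniform_lower_bound (n k : ℕ) (w : EdgeSlot n → ℝ)
    (hw : ∀ e, 0 ≤ w e) (hconn : 0 < minCutVal n w)
    (A : Matrix (Fin k) (EdgeSlot n) ℝ)
    (hA : ∀ w' : EdgeSlot n → ℝ, (∀ e, 0 ≤ w' e) → A.mulVec w' = A.mulVec w →
      0 < minCutVal n w') :
    ∃ τ : ℝ, 0 < τ ∧ ∀ w' : EdgeSlot n → ℝ, (∀ e, 0 ≤ w' e) →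
      A.mulVec w' = A.mulVec w → τ ≤ minCutVal n w' :=
  connectivity_certificate_uniform_lower_bound_general n k w A hA
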